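/- (Kolmogorov) Let 0 < p < 1. If u is a real-valued harmonic function in the unit disk 𝔻 belonging to h¹, and v is its harmonic conjugate normalized by v(0) = 0, then v ∈ h^p; moreover, there exists a constant B_p depending only on p such that M_p(r,v) ≤ B_p · M₁(r,u) for all 0 < r < 1 and all u ∈ h¹. -/

import Mathlib

open Complex Real Set

noncomputable section

open MeasureTheory intervalIntegral

lemma cauchyInterval {F : ℂ → ℂ} {R ρ : ℝ} (hF : DifferentiableOn ℂ F (Metric.ball 0 R))
    (hρ0 : 0 < ρ) (hρR : ρ < R) {z : ℂ} (hz : ‖z‖ < ρ) :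
    ∫ θ in (0:ℝ)..(2*π), (circleMap 0 ρ θ / (circleMap 0 ρ θ - z)) * F (circleMap 0 ρ θ)
      = 2 * π * F z := by
  have h1 : DiffContOnCl ℂ F (Metric.ball (0:ℂ) ρ) := by
    constructor
    · exact hF.mono (Metric.ball_subset_ball hρR.le)
    · refine hF.continuousOn.mono ?_
      rw [closure_ball (0:ℂ) hρ0.ne']
      exact Metric.closedBall_subset_ball hρR
  have h2 := h1.circleIntegral_sub_inv_smul (w := z) (by simpa using hz)
  simp only [circleIntegral, deriv_circleMap, smul_eq_mul] at h2
  have h3 : ∀ θ : ℝ, circleMap 0 ρ θ * I * ((circleMap 0 ρ θ - z)⁻¹ * F (circleMap 0 ρ θ))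
      = I * ((circleMap 0 ρ θ / (circleMap 0 ρ θ - z)) * F (circleMap 0 ρ θ)) := by
    intro θ; ring
  rw [intervalIntegral.integral_congr (g := fun θ =>
      I * ((circleMap 0 ρ θ / (circleMap 0 ρ θ - z)) * F (circleMap 0 ρ θ)))
      (fun θ _ => h3 θ), intervalIntegral.integral_const_mul] at h2
  apply mul_left_cancel₀ I_ne_zero
  rw [h2]; ring

lemma meanValue {F : ℂ → ℂ} {R ρ : ℝ} (hF : DifferentiableOn ℂ F (Metric.ball 0 R))
    (hρ0 : 0 < ρ) (hρR : ρ < R) :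
    ∫ θ in (0:ℝ)..(2*π), F (circleMap 0 ρ θ) = 2 * π * F 0 := by
  have h := cauchyInterval hF hρ0 hρR (z := 0) (by simpa using hρ0)
  rw [← h]
  apply intervalIntegral.integral_congr
  intro θ _
  have : circleMap 0 ρ θ ≠ 0 := by
    intro h0
    have := norm_circleMap_zero ρ θ
    rw [h0] at this
    simp at this
    exact hρ0.ne' (by linarith [abs_nonneg ρ, le_abs_self ρ, this])
  simp [this, div_self]

lemma circleMap_zero_ne (s : ℝ) (hs0 : 0 < s) (θ : ℝ) : circleMap 0 s θ ≠ 0 := by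
  intro h0
  have h := norm_circleMap_zero s θ
  rw [h0] at h
  simp at h
  rw [abs_of_pos hs0] at h
  exact hs0.ne' h.symm

lemma schwarzAux {F : ℂ → ℂ} {s : ℝ} (hF : DifferentiableOn ℂ F (Metric.ball 0 1))
    (hs0 : 0 < s) (hs1 : s < 1) {z : ℂ} (hz : ‖z‖ < s) :
    ∫ θ in (0:ℝ)..(2*π),
        (((s:ℂ)^2 + (starRingEnd ℂ) z * circleMap 0 s θ) /
          ((s:ℂ)^2 - (starRingEnd ℂ) z * circleMap 0 s θ)) * F (circleMap 0 s θ)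
      = 2 * π * F 0 := by
  classical
  set R₂ : ℝ := if z = 0 then 1 else min 1 (s^2 / ‖z‖) with hR₂
  have hsR₂ : s < R₂ := by
    rw [hR₂]
    split_ifs with h
    · exact hs1
    · refine lt_min hs1 ?_
      rw [lt_div_iff₀ (by simpa using h)]
      calc s * ‖z‖ < s * s := by
            exact mul_lt_mul_of_pos_left hz hs0
        _ = s ^ 2 := by ring
  have hkey : ∀ w : ℂ, ‖w‖ < R₂ → ‖(starRingEnd ℂ) z * w‖ < s^2 := by
    intro w hw
    rw [norm_mul, Complex.norm_conj]
    rcases eq_or_ne z 0 with h | h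
    · simp [h]; positivity
    · have hw2 : ‖w‖ < s^2 / ‖z‖ := by
        rw [hR₂] at hw; simp [h] at hw; exact hw.2
      have hz0 : 0 < ‖z‖ := by simpa using h
      calc ‖z‖ * ‖w‖ < ‖z‖ * (s^2 / ‖z‖) :=
            mul_lt_mul_of_pos_left hw2 hz0
        _ = s^2 := by field_simp
  have hR₂le : R₂ ≤ 1 := by
    rw [hR₂]; split_ifs
    · exact le_rfl
    · exact min_le_left _ _
  have hG : DifferentiableOn ℂ
      (fun w => (((s:ℂ)^2 + (starRingEnd ℂ) z * w) / ((s:ℂ)^2 - (starRingEnd ℂ) z * w)) * F w)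
      (Metric.ball 0 R₂) := by
    apply DifferentiableOn.mul
    · apply DifferentiableOn.div
      · exact (differentiable_const _).differentiableOn.add
          ((differentiable_id.const_mul _).differentiableOn)
      · exact (differentiable_const _).differentiableOn.sub
          ((differentiable_id.const_mul _).differentiableOn)
      · intro w hw
        intro h0
        have hlt := hkey w (by simpa using Metric.mem_ball.mp hw)
        have : (s:ℂ)^2 = (starRingEnd ℂ) z * w := by linear_combination h0
        rw [← this] at hlt
        simp [abs_of_pos hs0] at hlt
    · exact hF.mono (fun w hw => by
        rw [Metric.mem_ball] at hw ⊢; exact lt_of_lt_of_le hw hR₂le)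
  have h := meanValue hG hs0 hsR₂
  have hs2 : ((s:ℂ))^2 ≠ 0 := pow_ne_zero _ (Complex.ofReal_ne_zero.mpr hs0.ne')
  simpa [hs2] using h

lemma intervalIntegral_conj {f : ℝ → ℂ} {a b : ℝ} :
    (∫ θ in a..b, (starRingEnd ℂ) (f θ)) = (starRingEnd ℂ) (∫ θ in a..b, f θ) := by
  rw [intervalIntegral_eq_integral_uIoc, intervalIntegral_eq_integral_uIoc, integral_conj]
  split_ifs <;> simp

lemma intervalIntegral_re {f : ℝ → ℂ} {a b : ℝ} (hf : IntervalIntegrable f volume a b) :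
    (∫ θ in a..b, f θ).re = ∫ θ in a..b, (f θ).re := by
  rw [intervalIntegral_eq_integral_uIoc, intervalIntegral_eq_integral_uIoc]
  have h := ContinuousLinearMap.integral_comp_comm Complex.reCLM hf.def'
  simp only [Complex.reCLM_apply] at h
  split_ifs <;> simp [← h]

lemma contCircle {G : ℂ → ℂ} {R s : ℝ} (hG : ContinuousOn G (Metric.ball 0 R))
    (hs0 : 0 ≤ s) (hsR : s < R) : Continuous fun θ : ℝ => G (circleMap 0 s θ) := by
  apply hG.comp_continuous (continuous_circleMap 0 s)
  intro θ
  rw [Metric.mem_ball, dist_zero_right, norm_circleMap_zero,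
    _root_.abs_of_nonneg hs0]
  exact hsR

lemma schwarzFormula {F : ℂ → ℂ} {s : ℝ} (hF : DifferentiableOn ℂ F (Metric.ball 0 1))
    (hs0 : 0 < s) (hs1 : s < 1) {z : ℂ} (hz : ‖z‖ < s) :
    ∫ θ in (0:ℝ)..(2*π), ((circleMap 0 s θ + z) / (circleMap 0 s θ - z)) *
        (((F (circleMap 0 s θ)).re : ℝ) : ℂ)
      = 2 * π * F z - 2 * π * (((F 0).im : ℝ) : ℂ) * I := by
  have hζ : ∀ θ : ℝ, ‖circleMap 0 s θ‖ = s := by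
    intro θ; rw [norm_circleMap_zero, abs_of_pos hs0]
  have hζ0 : ∀ θ : ℝ, circleMap 0 s θ ≠ 0 := circleMap_zero_ne s hs0
  have hζz : ∀ θ : ℝ, circleMap 0 s θ - z ≠ 0 := by
    intro θ h
    have : circleMap 0 s θ = z := by linear_combination h
    rw [← this, hζ θ] at hz
    exact lt_irrefl _ hz
  have hden : ∀ θ : ℝ, ((s:ℂ)^2 - (starRingEnd ℂ) z * circleMap 0 s θ) ≠ 0 := by
    intro θ h
    have h2 : ‖(starRingEnd ℂ) z * circleMap 0 s θ‖ < s^2 := by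
      rw [norm_mul, Complex.norm_conj, hζ θ]
      calc ‖z‖ * s < s * s := by exact mul_lt_mul_of_pos_right hz hs0
        _ = s^2 := by ring
    have h3 : (s:ℂ)^2 = (starRingEnd ℂ) z * circleMap 0 s θ := by linear_combination h
    rw [← h3] at h2
    simp [abs_of_pos hs0] at h2
  have hcontF : Continuous fun θ : ℝ => F (circleMap 0 s θ) :=
    contCircle hF.continuousOn hs0.le hs1
  have hcontζ : Continuous fun θ : ℝ => circleMap 0 s θ := continuous_circleMap 0 s
  have hcontS : Continuous fun θ : ℝ => (circleMap 0 s θ + z) / (circleMap 0 s θ - z) :=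
    (hcontζ.add continuous_const).div ((hcontζ.sub continuous_const)) hζz
  have hcontC : Continuous fun θ : ℝ => (circleMap 0 s θ) / (circleMap 0 s θ - z) :=
    hcontζ.div ((hcontζ.sub continuous_const)) hζz
  -- I1
  have hI1 : (∫ θ in (0:ℝ)..(2*π), ((circleMap 0 s θ + z) / (circleMap 0 s θ - z)) *
      F (circleMap 0 s θ)) = 2 * (2 * π * F z) - 2 * π * F 0 := by
    have key1 : ∀ θ ∈ uIcc (0:ℝ) (2*π),
        ((circleMap 0 s θ + z) / (circleMap 0 s θ - z)) * F (circleMap 0 s θ)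
        = 2 * ((circleMap 0 s θ / (circleMap 0 s θ - z)) * F (circleMap 0 s θ))
          - F (circleMap 0 s θ) := by
      intro θ _
      field_simp [hζz θ]
      ring
    rw [intervalIntegral.integral_congr key1, intervalIntegral.integral_sub
      ((continuous_const.fun_mul (hcontC.fun_mul hcontF)).intervalIntegrable _ _)
      (hcontF.intervalIntegrable _ _), intervalIntegral.integral_const_mul,
      cauchyInterval hF hs0 hs1 hz, meanValue hF hs0 hs1]
  -- I2
  have hI2 : (∫ θ in (0:ℝ)..(2*π), ((circleMap 0 s θ + z) / (circleMap 0 s θ - z)) *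
      (starRingEnd ℂ) (F (circleMap 0 s θ))) = 2 * π * (starRingEnd ℂ) (F 0) := by
    have key2 : ∀ θ ∈ uIcc (0:ℝ) (2*π),
        ((circleMap 0 s θ + z) / (circleMap 0 s θ - z)) * (starRingEnd ℂ) (F (circleMap 0 s θ))
        = (starRingEnd ℂ) ((((s:ℂ)^2 + (starRingEnd ℂ) z * circleMap 0 s θ) /
            ((s:ℂ)^2 - (starRingEnd ℂ) z * circleMap 0 s θ)) * F (circleMap 0 s θ)) := by
      intro θ _
      simp only [map_mul, map_div₀, map_add, map_sub, Complex.conj_conj, map_pow,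
        Complex.conj_ofReal]
      have hcc : circleMap 0 s θ * (starRingEnd ℂ) (circleMap 0 s θ) = (s:ℂ)^2 := by
        rw [Complex.mul_conj]
        norm_cast
        rw [← Complex.sq_norm, hζ θ]
      congr 1
      have hconj0 : (starRingEnd ℂ) (circleMap 0 s θ) ≠ 0 := by
        simpa using hζ0 θ
      rw [← hcc]
      rw [show circleMap 0 s θ * (starRingEnd ℂ) (circleMap 0 s θ) +
            z * (starRingEnd ℂ) (circleMap 0 s θ)
          = (circleMap 0 s θ + z) * (starRingEnd ℂ) (circleMap 0 s θ) from by ring,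
        show circleMap 0 s θ * (starRingEnd ℂ) (circleMap 0 s θ) -
            z * (starRingEnd ℂ) (circleMap 0 s θ)
          = (circleMap 0 s θ - z) * (starRingEnd ℂ) (circleMap 0 s θ) from by ring,
        mul_div_mul_right _ _ hconj0]
    rw [intervalIntegral.integral_congr key2, _root_.intervalIntegral_conj,
      schwarzAux hF hs0 hs1 hz]
    simp [map_mul, Complex.conj_ofReal, map_ofNat]
  -- combine
  have key : ∀ θ ∈ uIcc (0:ℝ) (2*π),
      ((circleMap 0 s θ + z) / (circleMap 0 s θ - z)) * (((F (circleMap 0 s θ)).re : ℝ) : ℂ)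
      = (((circleMap 0 s θ + z) / (circleMap 0 s θ - z)) * F (circleMap 0 s θ)
        + ((circleMap 0 s θ + z) / (circleMap 0 s θ - z)) *
          (starRingEnd ℂ) (F (circleMap 0 s θ))) / 2 := by
    intro θ _
    have h2 : ((circleMap 0 s θ + z) / (circleMap 0 s θ - z) * F (circleMap 0 s θ)
        + (circleMap 0 s θ + z) / (circleMap 0 s θ - z) *
          (starRingEnd ℂ) (F (circleMap 0 s θ))) / 2
        = ((circleMap 0 s θ + z) / (circleMap 0 s θ - z)) *
          ((F (circleMap 0 s θ) + (starRingEnd ℂ) (F (circleMap 0 s θ))) / 2) := by ring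
    rw [h2, Complex.add_conj]
    push_cast
    ring
  have hcont2 : Continuous fun θ : ℝ => (starRingEnd ℂ) (F (circleMap 0 s θ)) :=
    Complex.continuous_conj.comp hcontF
  rw [intervalIntegral.integral_congr key, intervalIntegral.integral_div,
    intervalIntegral.integral_add
      ((hcontS.fun_mul hcontF).intervalIntegrable _ _)
      ((hcontS.fun_mul hcont2).intervalIntegrable _ _),
    hI1, hI2]
  have hsc := Complex.sub_conj (F 0)
  push_cast at hsc ⊢
  linear_combination (-(π:ℂ)) * hsc

lemma circle_sub_ne {s : ℝ} (hs0 : 0 < s) {x : ℂ} (hx : ‖x‖ < s) (θ : ℝ) :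
    circleMap 0 s θ - x ≠ 0 := by
  intro h
  have : circleMap 0 s θ = x := by linear_combination h
  rw [← this, norm_circleMap_zero, _root_.abs_of_pos hs0] at hx
  exact lt_irrefl _ hx

lemma poissonDiff {s : ℝ} (hs0 : 0 < s) {f : ℝ → ℝ} (hf : Continuous f) :
    DifferentiableOn ℂ
      (fun z => ∫ θ in (0:ℝ)..(2*π), ((circleMap 0 s θ + z) / (circleMap 0 s θ - z)) * (f θ : ℂ))
      (Metric.ball 0 s) := by
  intro z₀ hz₀
  rw [Metric.mem_ball, dist_zero_right] at hz₀
  set d : ℝ := (s - ‖z₀‖) / 2 with hdd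
  have hd : 0 < d := by
    rw [hdd]; linarith
  have hball : ∀ x : ℂ, x ∈ Metric.ball z₀ d → ‖x‖ < s := by
    intro x hx
    rw [Metric.mem_ball] at hx
    have h1 : ‖x‖ ≤ ‖z₀‖ + d := by
      calc ‖x‖ = ‖z₀ + (x - z₀)‖ := by ring_nf
        _ ≤ ‖z₀‖ + ‖x - z₀‖ := norm_add_le _ _
        _ ≤ ‖z₀‖ + d := by
            have := hx.le; rw [dist_eq_norm] at this; linarith
    have : ‖z₀‖ + d < s := by rw [hdd]; linarith
    calc ‖x‖ = ‖x‖ := rfl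
      _ < s := lt_of_le_of_lt h1 this
  have hlow : ∀ x : ℂ, x ∈ Metric.ball z₀ d → ∀ θ : ℝ, d ≤ ‖circleMap 0 s θ - x‖ := by
    intro x hx θ
    rw [Metric.mem_ball] at hx
    have h1 : ‖x‖ ≤ ‖z₀‖ + d := by
      calc ‖x‖ = ‖x‖ := rfl
        _ = ‖z₀ + (x - z₀)‖ := by ring_nf
        _ ≤ ‖z₀‖ + ‖x - z₀‖ := norm_add_le _ _
        _ ≤ ‖z₀‖ + d := by
            have := hx.le; rw [dist_eq_norm] at this; linarith
    have h2 : s - ‖x‖ ≤ ‖circleMap 0 s θ - x‖ := by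
      have h3 := norm_sub_norm_le (circleMap 0 s θ) x
      simp only [norm_circleMap_zero, _root_.abs_of_pos hs0] at h3
      exact h3
    have : d ≤ s - ‖x‖ := by rw [hdd] at *; linarith
    linarith
  have hcont : ∀ x : ℂ, ‖x‖ < s →
      Continuous (fun θ : ℝ => ((circleMap 0 s θ + x) / (circleMap 0 s θ - x)) * (f θ : ℂ)) := by
    intro x hx
    exact ((((continuous_circleMap 0 s).add continuous_const).div
      (((continuous_circleMap 0 s).sub continuous_const)) (circle_sub_ne hs0 hx)).mul
      (Complex.continuous_ofReal.comp hf))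
  have key := intervalIntegral.hasDerivAt_integral_of_dominated_loc_of_deriv_le
    (F := fun x θ => ((circleMap 0 s θ + x) / (circleMap 0 s θ - x)) * (f θ : ℂ))
    (F' := fun x θ => (2 * circleMap 0 s θ / (circleMap 0 s θ - x) ^ 2) * (f θ : ℂ))
    (x₀ := z₀) (s := Metric.ball z₀ d) (a := 0) (b := 2 * π) (μ := volume)
    (bound := fun θ => 2 * s * |f θ| / d ^ 2) (Metric.ball_mem_nhds z₀ hd)
    ?_ ?_ ?_ ?_ ?_ ?_
  · exact key.2.differentiableAt.differentiableWithinAt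
  · filter_upwards [Metric.ball_mem_nhds z₀ hd] with x hx
    exact ((hcont x (hball x hx)).aestronglyMeasurable).restrict
  · exact (hcont z₀ (by exact hz₀)).intervalIntegrable _ _
  · have hcont' : Continuous (fun θ : ℝ =>
        (2 * circleMap 0 s θ / (circleMap 0 s θ - z₀) ^ 2) * (f θ : ℂ)) := by
      apply Continuous.mul
      · apply Continuous.div (continuous_const.mul (continuous_circleMap 0 s))
          (((continuous_circleMap 0 s).sub continuous_const).pow 2)
        intro θ
        exact pow_ne_zero 2 (circle_sub_ne hs0 hz₀ θ)
      · exact Complex.continuous_ofReal.comp hf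
    exact hcont'.aestronglyMeasurable.restrict
  · refine Filter.Eventually.of_forall (fun θ _ x hx => ?_)
    have h1 : d ≤ ‖circleMap 0 s θ - x‖ := hlow x hx θ
    have h2 : ‖2 * circleMap 0 s θ / (circleMap 0 s θ - x) ^ 2 * (f θ : ℂ)‖
        = 2 * s * |f θ| / ‖circleMap 0 s θ - x‖ ^ 2 := by
      rw [norm_mul, norm_div, norm_mul, norm_pow, norm_circleMap_zero, _root_.abs_of_pos hs0,
        Complex.norm_real, Real.norm_eq_abs, Complex.norm_two]
      ring
    rw [h2]
    apply div_le_div_of_nonneg_left ?_ (by positivity) ?_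
    · positivity
    · exact pow_le_pow_left₀ hd.le h1 2
  · exact (((continuous_const.mul (hf.abs)).div_const _)).intervalIntegrable _ _
  · refine Filter.Eventually.of_forall (fun θ _ x hx => ?_)
    have hne : circleMap 0 s θ - x ≠ 0 := circle_sub_ne hs0 (hball x hx) θ
    have h1 : HasDerivAt (fun w : ℂ => circleMap 0 s θ + w) 1 x := by
      simpa using (hasDerivAt_id x).const_add (circleMap 0 s θ)
    have h2 : HasDerivAt (fun w : ℂ => circleMap 0 s θ - w) (-1) x := by
      simpa using (hasDerivAt_id x).const_sub (circleMap 0 s θ)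
    have h3 := (h1.div h2 hne).mul_const ((f θ : ℂ))
    have he : (1 * (circleMap 0 s θ - x) - (circleMap 0 s θ + x) * (-1)) = 2 * circleMap 0 s θ := by
      ring
    rw [he] at h3; exact h3

lemma reS_nonneg {s : ℝ} (hs0 : 0 < s) {z : ℂ} (hz : ‖z‖ < s) (θ : ℝ) :
    0 ≤ ((circleMap 0 s θ + z) / (circleMap 0 s θ - z)).re := by
  have hζ : Complex.normSq (circleMap 0 s θ) = s ^ 2 := by
    rw [Complex.normSq_eq_norm_sq, norm_circleMap_zero, _root_.abs_of_pos hs0]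
  have hzsq : Complex.normSq z < s ^ 2 := by
    rw [Complex.normSq_eq_norm_sq]
    nlinarith [norm_nonneg z]
  rw [Complex.div_re, ← add_div]
  apply div_nonneg _ (Complex.normSq_nonneg _)
  have h1 : (circleMap 0 s θ + z).re * (circleMap 0 s θ - z).re
      + (circleMap 0 s θ + z).im * (circleMap 0 s θ - z).im
      = Complex.normSq (circleMap 0 s θ) - Complex.normSq z := by
    simp only [Complex.normSq_apply, Complex.add_re, Complex.add_im, Complex.sub_re,
      Complex.sub_im]
    ring
  rw [h1, hζ]
  linarith

lemma poissonReNonneg {s : ℝ} (hs0 : 0 < s) {f : ℝ → ℝ} (hf : Continuous f)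
    (hfpos : ∀ θ, 0 ≤ f θ) {z : ℂ} (hz : ‖z‖ < s) :
    0 ≤ (∫ θ in (0:ℝ)..(2*π), ((circleMap 0 s θ + z) / (circleMap 0 s θ - z)) * (f θ : ℂ)).re := by
  have hcont : Continuous (fun θ : ℝ =>
      ((circleMap 0 s θ + z) / (circleMap 0 s θ - z)) * (f θ : ℂ)) :=
    ((((continuous_circleMap 0 s).add continuous_const).div
      (((continuous_circleMap 0 s).sub continuous_const)) (circle_sub_ne hs0 hz)).mul
      (Complex.continuous_ofReal.comp hf))
  rw [intervalIntegral_re (hcont.intervalIntegrable _ _)]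
  apply intervalIntegral.integral_nonneg (by positivity)
  intro θ _
  have h1 : (((circleMap 0 s θ + z) / (circleMap 0 s θ - z)) * (f θ : ℂ)).re
      = ((circleMap 0 s θ + z) / (circleMap 0 s θ - z)).re * f θ := by
    rw [Complex.mul_re]
    simp
  rw [h1]
  exact mul_nonneg (reS_nonneg hs0 hz θ) (hfpos θ)

lemma poissonAtZero {s : ℝ} (hs0 : 0 < s) (f : ℝ → ℝ) :
    (∫ θ in (0:ℝ)..(2*π), ((circleMap 0 s θ + 0) / (circleMap 0 s θ - 0)) * (f θ : ℂ))
      = ((∫ θ in (0:ℝ)..(2*π), f θ : ℝ) : ℂ) := by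
  rw [← intervalIntegral.integral_ofReal]
  apply intervalIntegral.integral_congr
  intro θ _
  have := circleMap_zero_ne s hs0 θ
  simp [div_self this]

lemma reH_bound {p δ : ℝ} (hp0 : 0 < p) (hp1 : p < 1) (hδ : 0 < δ) {w : ℂ} (hw : 0 ≤ w.re) :
    Real.cos (p * π / 2) * |w.im| ^ p
      ≤ (Complex.exp ((p:ℂ) * Complex.log (w + (δ:ℂ)))).re := by
  set ζ := w + (δ:ℂ) with hζdef
  have hζre : 0 < ζ.re := by
    rw [hζdef]; simp only [Complex.add_re, Complex.ofReal_re]; linarith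
  have hζ0 : ζ ≠ 0 := by
    intro h; rw [h] at hζre; simp at hζre
  have ha : 0 < ‖ζ‖ := norm_pos_iff.mpr hζ0
  rw [Complex.exp_re]
  have hre : ((p:ℂ) * Complex.log ζ).re = p * Real.log (‖ζ‖) := by
    simp [Complex.mul_re, Complex.log_re]
  have him : ((p:ℂ) * Complex.log ζ).im = p * Complex.arg ζ := by
    simp [Complex.mul_im, Complex.log_im]
  rw [hre, him]
  have hexp : Real.exp (p * Real.log (‖ζ‖)) = (‖ζ‖) ^ p := by
    rw [Real.rpow_def_of_pos ha, mul_comm]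
  rw [hexp]
  have harg : |Complex.arg ζ| < π / 2 := Complex.abs_arg_lt_pi_div_two_iff.mpr (Or.inl hζre)
  have hargpi := Complex.abs_arg_le_pi ζ
  have hcos : Real.cos (p * π / 2) ≤ Real.cos (p * Complex.arg ζ) := by
    rw [← Real.cos_abs (p * Complex.arg ζ)]
    apply Real.cos_le_cos_of_nonneg_of_le_pi (abs_nonneg _)
    · nlinarith [pi_pos]
    · rw [abs_mul, _root_.abs_of_pos hp0]
      nlinarith
  have him2 : |w.im| ^ p ≤ (‖ζ‖) ^ p := by
    apply Real.rpow_le_rpow (abs_nonneg _) _ hp0.le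
    have h1 := Complex.abs_im_le_norm ζ
    have h2 : ζ.im = w.im := by rw [hζdef]; simp
    rw [h2] at h1
    exact h1
  have hcospos : 0 < Real.cos (p * π / 2) := by
    apply Real.cos_pos_of_mem_Ioo
    constructor
    · nlinarith [pi_pos]
    · nlinarith [pi_pos]
  calc Real.cos (p * π / 2) * |w.im| ^ p
      ≤ Real.cos (p * π / 2) * (‖ζ‖) ^ p :=
        mul_le_mul_of_nonneg_left him2 hcospos.le
    _ ≤ Real.cos (p * Complex.arg ζ) * (‖ζ‖) ^ p :=
        mul_le_mul_of_nonneg_right hcos (by positivity)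
    _ = (‖ζ‖) ^ p * Real.cos (p * Complex.arg ζ) := by ring

lemma kolmogorovPosDelta {p : ℝ} (hp0 : 0 < p) (hp1 : p < 1) {G : ℂ → ℂ} {s r δ : ℝ}
    (hG : DifferentiableOn ℂ G (Metric.ball 0 s))
    (hre : ∀ z ∈ Metric.ball (0:ℂ) s, 0 ≤ (G z).re) (him0 : (G 0).im = 0)
    (hr0 : 0 < r) (hrs : r < s) (hδ : 0 < δ) :
    Real.cos (p * π / 2) * ∫ θ in (0:ℝ)..(2*π), |(G (circleMap 0 r θ)).im| ^ p
      ≤ 2 * π * ((G 0).re + δ) ^ p := by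
  have hs0 : 0 < s := lt_trans hr0 hrs
  set H : ℂ → ℂ := fun w => Complex.exp ((p:ℂ) * Complex.log (G w + (δ:ℂ))) with hHdef
  have hmem : ∀ z ∈ Metric.ball (0:ℂ) s, (G z + (δ:ℂ)) ∈ Complex.slitPlane := by
    intro z hz
    apply Or.inl
    simp only [Complex.add_re, Complex.ofReal_re]
    linarith [hre z hz]
  have hH : DifferentiableOn ℂ H (Metric.ball 0 s) := by
    intro z hz
    have hGz : DifferentiableAt ℂ G z := hG.differentiableAt (Metric.isOpen_ball.mem_nhds hz)
    exact ((((hGz.add_const ((δ:ℂ))).clog (hmem z hz)).const_mul _).cexp).differentiableWithinAt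
  have hmean := meanValue hH hr0 hrs
  have hzero : (0:ℂ) ∈ Metric.ball (0:ℂ) s := by simp [hs0]
  set c : ℝ := (G 0).re with hcdef
  have hc0 : 0 ≤ c := hre 0 hzero
  have hH0 : H 0 = (((c + δ) ^ p : ℝ) : ℂ) := by
    have hG0 : G 0 + (δ:ℂ) = (((c + δ : ℝ)) : ℂ) := by
      apply Complex.ext <;> simp [him0, hcdef]
    rw [hHdef]
    simp only
    rw [hG0, ← Complex.ofReal_log (by linarith), ← Complex.ofReal_mul, ← Complex.ofReal_exp]
    congr 1
    rw [Real.rpow_def_of_pos (by linarith), mul_comm]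
  have hcontH : Continuous fun θ : ℝ => H (circleMap 0 r θ) :=
    contCircle hH.continuousOn hr0.le hrs
  have hmeanRe : (∫ θ in (0:ℝ)..(2*π), (H (circleMap 0 r θ)).re) = 2 * π * (c + δ) ^ p := by
    rw [← intervalIntegral_re (hcontH.intervalIntegrable _ _), hmean, hH0]
    simp [Complex.mul_re]
  have hcontim : Continuous fun θ : ℝ => |(G (circleMap 0 r θ)).im| ^ p := by
    apply Continuous.rpow_const
    · exact (Complex.continuous_im.comp (contCircle hG.continuousOn hr0.le hrs)).abs
    · intro x; exact Or.inr hp0.le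
  rw [← intervalIntegral.integral_const_mul]
  have hmono : (∫ θ in (0:ℝ)..(2*π),
      Real.cos (p * π / 2) * |(G (circleMap 0 r θ)).im| ^ p)
      ≤ ∫ θ in (0:ℝ)..(2*π), (H (circleMap 0 r θ)).re := by
    apply intervalIntegral.integral_mono_on (by positivity)
      ((continuous_const.mul hcontim).intervalIntegrable _ _)
      ((Complex.continuous_re.comp hcontH).intervalIntegrable _ _)
    intro θ _
    have hmem2 : circleMap 0 r θ ∈ Metric.ball (0:ℂ) s := by
      rw [Metric.mem_ball, dist_zero_right, norm_circleMap_zero,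
        _root_.abs_of_pos hr0]
      exact hrs
    exact reH_bound hp0 hp1 hδ (hre _ hmem2)
  rw [← hmeanRe]
  exact hmono

lemma kolmogorovPos {p : ℝ} (hp0 : 0 < p) (hp1 : p < 1) {G : ℂ → ℂ} {s r : ℝ}
    (hG : DifferentiableOn ℂ G (Metric.ball 0 s))
    (hre : ∀ z ∈ Metric.ball (0:ℂ) s, 0 ≤ (G z).re) (him0 : (G 0).im = 0)
    (hr0 : 0 < r) (hrs : r < s) :
    Real.cos (p * π / 2) * ∫ θ in (0:ℝ)..(2*π), |(G (circleMap 0 r θ)).im| ^ p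
      ≤ 2 * π * ((G 0).re) ^ p := by
  have htend : Filter.Tendsto (fun δ : ℝ => 2 * π * ((G 0).re + δ) ^ p)
      (nhdsWithin 0 (Ioi 0)) (nhds (2 * π * ((G 0).re) ^ p)) := by
    apply Filter.Tendsto.mono_left _ nhdsWithin_le_nhds
    have h1 : ContinuousAt (fun δ : ℝ => 2 * π * ((G 0).re + δ) ^ p) 0 := by
      apply ContinuousAt.mul continuousAt_const
      apply ContinuousAt.rpow_const (continuousAt_const.add continuousAt_id)
      exact Or.inr hp0.le
    have h2 := h1.tendsto
    simpa using h2
  apply ge_of_tendsto htend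
  filter_upwards [self_mem_nhdsWithin] with δ hδ
  exact kolmogorovPosDelta hp0 hp1 hG hre him0 hr0 hrs hδ

lemma nnreal_add_rpow_le {p : ℝ} (hp0 : 0 < p) (hp1 : p ≤ 1) (x y : NNReal) :
    (x + y) ^ p ≤ x ^ p + y ^ p := by
  have h := NNReal.rpow_add_rpow_le x y hp0 hp1
  simp only [NNReal.rpow_one, one_div_one] at h
  have h2 := NNReal.rpow_le_rpow h hp0.le
  rwa [← NNReal.rpow_mul, one_div, inv_mul_cancel₀ hp0.ne', NNReal.rpow_one] at h2

lemma real_add_rpow_le {p x y : ℝ} (hp0 : 0 < p) (hp1 : p ≤ 1) (hx : 0 ≤ x) (hy : 0 ≤ y) :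
    (x + y) ^ p ≤ x ^ p + y ^ p := by
  have h := nnreal_add_rpow_le hp0 hp1 x.toNNReal y.toNNReal
  have h2 := NNReal.coe_le_coe.mpr h
  rw [← Real.toNNReal_add hx hy] at h2
  simpa [NNReal.coe_rpow, Real.coe_toNNReal, hx, hy, Real.toNNReal_add hx hy,
    Real.coe_toNNReal _ (by positivity : (0:ℝ) ≤ x + y)] using h2

lemma mainIneq {p : ℝ} (hp0 : 0 < p) (hp1 : p < 1) {F : ℂ → ℂ}
    (hF : DifferentiableOn ℂ F (Metric.ball 0 1)) (hFim0 : (F 0).im = 0)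
    {r s : ℝ} (hr0 : 0 < r) (hrs : r < s) (hs1 : s < 1) :
    Real.cos (p * π / 2) * ((2*π) ^ p * ∫ θ in (0:ℝ)..(2*π), |(F (circleMap 0 r θ)).im| ^ p)
      ≤ 4 * π * (∫ θ in (0:ℝ)..(2*π), |(F (circleMap 0 s θ)).re|) ^ p := by
  have hs0 : 0 < s := lt_trans hr0 hrs
  set u : ℝ → ℝ := fun θ => (F (circleMap 0 s θ)).re with hudef
  have hu_cont : Continuous u :=
    Complex.continuous_re.comp (contCircle hF.continuousOn hs0.le hs1)
  set fp : ℝ → ℝ := fun θ => max (u θ) 0 with hfpdef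
  set fm : ℝ → ℝ := fun θ => max (-(u θ)) 0 with hfmdef
  have hfp_cont : Continuous fp := hu_cont.max continuous_const
  have hfm_cont : Continuous fm := hu_cont.neg.max continuous_const
  have hfp_pos : ∀ θ, 0 ≤ fp θ := fun θ => le_max_right _ _
  have hfm_pos : ∀ θ, 0 ≤ fm θ := fun θ => le_max_right _ _
  have hsub_pt : ∀ θ, fp θ - fm θ = u θ := by
    intro θ
    rcases le_total (u θ) 0 with h | h
    · rw [hfpdef, hfmdef]
      simp only
      rw [max_eq_right h, max_eq_left (by linarith : (0:ℝ) ≤ -(u θ))]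
      ring
    · rw [hfpdef, hfmdef]
      simp only
      rw [max_eq_left h, max_eq_right (by linarith : -(u θ) ≤ 0)]
      ring
  have hadd_pt : ∀ θ, fp θ + fm θ = |u θ| := by
    intro θ
    rcases le_total (u θ) 0 with h | h
    · rw [hfpdef, hfmdef]
      simp only
      rw [max_eq_right h, max_eq_left (by linarith : (0:ℝ) ≤ -(u θ)), abs_of_nonpos h]
      ring
    · rw [hfpdef, hfmdef]
      simp only
      rw [max_eq_left h, max_eq_right (by linarith : -(u θ) ≤ 0), _root_.abs_of_nonneg h]
      ring
  set G₁ : ℂ → ℂ := fun z =>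
    ∫ θ in (0:ℝ)..(2*π), ((circleMap 0 s θ + z) / (circleMap 0 s θ - z)) * (fp θ : ℂ) with hG1def
  set G₂ : ℂ → ℂ := fun z =>
    ∫ θ in (0:ℝ)..(2*π), ((circleMap 0 s θ + z) / (circleMap 0 s θ - z)) * (fm θ : ℂ) with hG2def
  have hG1diff : DifferentiableOn ℂ G₁ (Metric.ball 0 s) := poissonDiff hs0 hfp_cont
  have hG2diff : DifferentiableOn ℂ G₂ (Metric.ball 0 s) := poissonDiff hs0 hfm_cont
  have habs : ∀ z : ℂ, z ∈ Metric.ball (0:ℂ) s → ‖z‖ < s := by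
    intro z hz
    rw [Metric.mem_ball, dist_zero_right] at hz
    exact hz
  have hG1re : ∀ z ∈ Metric.ball (0:ℂ) s, 0 ≤ (G₁ z).re := fun z hz =>
    poissonReNonneg hs0 hfp_cont hfp_pos (habs z hz)
  have hG2re : ∀ z ∈ Metric.ball (0:ℂ) s, 0 ≤ (G₂ z).re := fun z hz =>
    poissonReNonneg hs0 hfm_cont hfm_pos (habs z hz)
  have hG10 : G₁ 0 = ((∫ θ in (0:ℝ)..(2*π), fp θ : ℝ) : ℂ) := poissonAtZero hs0 fp
  have hG20 : G₂ 0 = ((∫ θ in (0:ℝ)..(2*π), fm θ : ℝ) : ℂ) := poissonAtZero hs0 fm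
  have hG1im0 : (G₁ 0).im = 0 := by rw [hG10]; simp
  have hG2im0 : (G₂ 0).im = 0 := by rw [hG20]; simp
  -- subtraction identity
  have hsub : ∀ z ∈ Metric.ball (0:ℂ) s, G₁ z - G₂ z = 2 * π * F z := by
    intro z hz
    have hz' := habs z hz
    have hint1 : IntervalIntegrable
        (fun θ => ((circleMap 0 s θ + z) / (circleMap 0 s θ - z)) * (fp θ : ℂ))
        volume 0 (2*π) :=
      (((((continuous_circleMap 0 s).add continuous_const).div
        (((continuous_circleMap 0 s).sub continuous_const)) (circle_sub_ne hs0 hz')).mul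
        (Complex.continuous_ofReal.comp hfp_cont))).intervalIntegrable _ _
    have hint2 : IntervalIntegrable
        (fun θ => ((circleMap 0 s θ + z) / (circleMap 0 s θ - z)) * (fm θ : ℂ))
        volume 0 (2*π) :=
      (((((continuous_circleMap 0 s).add continuous_const).div
        (((continuous_circleMap 0 s).sub continuous_const)) (circle_sub_ne hs0 hz')).mul
        (Complex.continuous_ofReal.comp hfm_cont))).intervalIntegrable _ _
    rw [hG1def, hG2def]
    simp only
    rw [← intervalIntegral.integral_sub hint1 hint2]
    have hcongr : ∀ θ ∈ uIcc (0:ℝ) (2*π),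
        ((circleMap 0 s θ + z) / (circleMap 0 s θ - z)) * (fp θ : ℂ)
          - ((circleMap 0 s θ + z) / (circleMap 0 s θ - z)) * (fm θ : ℂ)
        = ((circleMap 0 s θ + z) / (circleMap 0 s θ - z)) * ((u θ : ℝ) : ℂ) := by
      intro θ _
      rw [← hsub_pt θ]
      push_cast
      ring
    rw [intervalIntegral.integral_congr hcongr]
    have hschwarz := schwarzFormula hF hs0 hs1 hz'
    rw [hudef]
    simp only
    rw [hschwarz, hFim0]
    push_cast
    ring
  -- Kolmogorov for each part
  have hk1 := kolmogorovPos hp0 hp1 hG1diff hG1re hG1im0 hr0 hrs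
  have hk2 := kolmogorovPos hp0 hp1 hG2diff hG2re hG2im0 hr0 hrs
  -- pointwise bound at radius r
  have hmemr : ∀ θ : ℝ, circleMap 0 r θ ∈ Metric.ball (0:ℂ) s := by
    intro θ
    rw [Metric.mem_ball, dist_zero_right, norm_circleMap_zero,
      _root_.abs_of_pos hr0]
    exact hrs
  have hpt : ∀ θ : ℝ, (2*π) ^ p * |(F (circleMap 0 r θ)).im| ^ p
      ≤ |(G₁ (circleMap 0 r θ)).im| ^ p + |(G₂ (circleMap 0 r θ)).im| ^ p := by
    intro θ
    have h1 := congrArg Complex.im (hsub (circleMap 0 r θ) (hmemr θ))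
    have h2 : (G₁ (circleMap 0 r θ)).im - (G₂ (circleMap 0 r θ)).im
        = 2 * π * (F (circleMap 0 r θ)).im := by
      simp only [Complex.sub_im] at h1
      rw [h1]
      simp [Complex.mul_im, Complex.mul_re]
    have h3 : (2*π) ^ p * |(F (circleMap 0 r θ)).im| ^ p
        = |2 * π * (F (circleMap 0 r θ)).im| ^ p := by
      rw [abs_mul, ← Real.mul_rpow (by positivity) (abs_nonneg _),
        _root_.abs_of_pos (by positivity : (0:ℝ) < 2*π)]
    rw [h3, ← h2]
    calc |(G₁ (circleMap 0 r θ)).im - (G₂ (circleMap 0 r θ)).im| ^ p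
        ≤ (|(G₁ (circleMap 0 r θ)).im| + |(G₂ (circleMap 0 r θ)).im|) ^ p :=
          Real.rpow_le_rpow (abs_nonneg _) (abs_sub _ _) hp0.le
      _ ≤ |(G₁ (circleMap 0 r θ)).im| ^ p + |(G₂ (circleMap 0 r θ)).im| ^ p :=
          real_add_rpow_le hp0 hp1.le (abs_nonneg _) (abs_nonneg _)
  -- integrate pointwise bound
  have hcontG1 : Continuous fun θ : ℝ => |(G₁ (circleMap 0 r θ)).im| ^ p := by
    apply Continuous.rpow_const
      ((Complex.continuous_im.comp (contCircle hG1diff.continuousOn hr0.le hrs)).abs)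
    intro x; exact Or.inr hp0.le
  have hcontG2 : Continuous fun θ : ℝ => |(G₂ (circleMap 0 r θ)).im| ^ p := by
    apply Continuous.rpow_const
      ((Complex.continuous_im.comp (contCircle hG2diff.continuousOn hr0.le hrs)).abs)
    intro x; exact Or.inr hp0.le
  have hcontFim : Continuous fun θ : ℝ => (2*π) ^ p * |(F (circleMap 0 r θ)).im| ^ p := by
    apply Continuous.mul continuous_const
    apply Continuous.rpow_const
      ((Complex.continuous_im.comp (contCircle hF.continuousOn hr0.le (lt_trans hrs hs1))).abs)
    intro x; exact Or.inr hp0.le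
  have hintineq : (∫ θ in (0:ℝ)..(2*π), (2*π) ^ p * |(F (circleMap 0 r θ)).im| ^ p)
      ≤ (∫ θ in (0:ℝ)..(2*π), |(G₁ (circleMap 0 r θ)).im| ^ p)
        + ∫ θ in (0:ℝ)..(2*π), |(G₂ (circleMap 0 r θ)).im| ^ p := by
    rw [← intervalIntegral.integral_add (hcontG1.intervalIntegrable _ _)
      (hcontG2.intervalIntegrable _ _)]
    apply intervalIntegral.integral_mono_on (by positivity)
      (hcontFim.intervalIntegrable _ _)
      ((hcontG1.add hcontG2).intervalIntegrable _ _)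
    intro θ _
    exact hpt θ
  -- assemble
  have hcos : 0 < Real.cos (p * π / 2) := by
    apply Real.cos_pos_of_mem_Ioo
    constructor
    · nlinarith [pi_pos]
    · nlinarith [pi_pos]
  have hintfp : (0:ℝ) ≤ ∫ θ in (0:ℝ)..(2*π), fp θ :=
    intervalIntegral.integral_nonneg (by positivity) (fun θ _ => hfp_pos θ)
  have hintfm : (0:ℝ) ≤ ∫ θ in (0:ℝ)..(2*π), fm θ :=
    intervalIntegral.integral_nonneg (by positivity) (fun θ _ => hfm_pos θ)
  have hsum : (∫ θ in (0:ℝ)..(2*π), fp θ) + (∫ θ in (0:ℝ)..(2*π), fm θ)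
      = ∫ θ in (0:ℝ)..(2*π), |u θ| := by
    rw [← intervalIntegral.integral_add (hfp_cont.intervalIntegrable _ _)
      (hfm_cont.intervalIntegrable _ _)]
    exact intervalIntegral.integral_congr (fun θ _ => hadd_pt θ)
  have hG10re : (G₁ 0).re = ∫ θ in (0:ℝ)..(2*π), fp θ := by rw [hG10]; simp
  have hG20re : (G₂ 0).re = ∫ θ in (0:ℝ)..(2*π), fm θ := by rw [hG20]; simp
  rw [hG10re] at hk1
  rw [hG20re] at hk2
  have hfinal1 : ((∫ θ in (0:ℝ)..(2*π), fp θ)) ^ p ≤ (∫ θ in (0:ℝ)..(2*π), |u θ|) ^ p := by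
    apply Real.rpow_le_rpow hintfp _ hp0.le
    rw [← hsum]; linarith
  have hfinal2 : ((∫ θ in (0:ℝ)..(2*π), fm θ)) ^ p ≤ (∫ θ in (0:ℝ)..(2*π), |u θ|) ^ p := by
    apply Real.rpow_le_rpow hintfm _ hp0.le
    rw [← hsum]; linarith
  calc Real.cos (p * π / 2) * ((2*π) ^ p * ∫ θ in (0:ℝ)..(2*π), |(F (circleMap 0 r θ)).im| ^ p)
      = Real.cos (p * π / 2) * ∫ θ in (0:ℝ)..(2*π), (2*π) ^ p * |(F (circleMap 0 r θ)).im| ^ p := by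
        rw [intervalIntegral.integral_const_mul]
    _ ≤ Real.cos (p * π / 2) * ((∫ θ in (0:ℝ)..(2*π), |(G₁ (circleMap 0 r θ)).im| ^ p)
        + ∫ θ in (0:ℝ)..(2*π), |(G₂ (circleMap 0 r θ)).im| ^ p) :=
        mul_le_mul_of_nonneg_left hintineq hcos.le
    _ = Real.cos (p * π / 2) * (∫ θ in (0:ℝ)..(2*π), |(G₁ (circleMap 0 r θ)).im| ^ p)
        + Real.cos (p * π / 2) * ∫ θ in (0:ℝ)..(2*π), |(G₂ (circleMap 0 r θ)).im| ^ p := by ring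
    _ ≤ 2 * π * ((∫ θ in (0:ℝ)..(2*π), fp θ)) ^ p
        + 2 * π * ((∫ θ in (0:ℝ)..(2*π), fm θ)) ^ p := add_le_add hk1 hk2
    _ ≤ 2 * π * ((∫ θ in (0:ℝ)..(2*π), |u θ|)) ^ p
        + 2 * π * ((∫ θ in (0:ℝ)..(2*π), |u θ|)) ^ p := by
        have hπ : (0:ℝ) < 2 * π := by positivity
        exact add_le_add (mul_le_mul_of_nonneg_left hfinal1 hπ.le)
          (mul_le_mul_of_nonneg_left hfinal2 hπ.le)
    _ = 4 * π * ((∫ θ in (0:ℝ)..(2*π), |u θ|)) ^ p := by ring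

lemma coreIneq {p : ℝ} (hp0 : 0 < p) (hp1 : p < 1) {F : ℂ → ℂ}
    (hF : DifferentiableOn ℂ F (Metric.ball 0 1)) (hFim0 : (F 0).im = 0)
    {r : ℝ} (hr0 : 0 < r) (hr1 : r < 1) :
    Real.cos (p * π / 2) * ((2*π) ^ p * ∫ θ in (0:ℝ)..(2*π), |(F (circleMap 0 r θ)).im| ^ p)
      ≤ 4 * π * (∫ θ in (0:ℝ)..(2*π), |(F (circleMap 0 r θ)).re|) ^ p := by
  set c : ℝ := (1 + r) / 2 with hcdef
  have hrc : r < c := by rw [hcdef]; linarith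
  have hc1 : c < 1 := by rw [hcdef]; linarith
  have hc0 : 0 < c := by rw [hcdef]; linarith
  -- uniform bound for F on the closed ball of radius c
  obtain ⟨M, hM⟩ := (isCompact_closedBall (0:ℂ) c).exists_bound_of_continuousOn
    (hF.continuousOn.mono (fun x hx => by
      rw [Metric.mem_closedBall] at hx
      rw [Metric.mem_ball]
      exact lt_of_le_of_lt hx hc1))
  -- the circle integral of |Re F| is continuous from the right in the radius
  have htend : Filter.Tendsto (fun s : ℝ => ∫ θ in (0:ℝ)..(2*π), |(F (circleMap 0 s θ)).re|)
      (nhdsWithin r (Ioi r)) (nhds (∫ θ in (0:ℝ)..(2*π), |(F (circleMap 0 r θ)).re|)) := by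
    apply intervalIntegral.tendsto_integral_filter_of_dominated_convergence
      (bound := fun _ => M)
    · filter_upwards [Ioo_mem_nhdsGT_of_mem (⟨le_refl r, hrc⟩ : r ∈ Ico r c)] with s hs
      have hcont : Continuous fun θ : ℝ => |(F (circleMap 0 s θ)).re| :=
        (Complex.continuous_re.comp
          (contCircle hF.continuousOn (by linarith [hs.1] : (0:ℝ) ≤ s)
            (by linarith [hs.2] : s < 1))).abs
      exact hcont.aestronglyMeasurable.restrict
    · filter_upwards [Ioo_mem_nhdsGT_of_mem (⟨le_refl r, hrc⟩ : r ∈ Ico r c)] with s hs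
      apply Filter.Eventually.of_forall
      intro θ _
      have hmem : circleMap 0 s θ ∈ Metric.closedBall (0:ℂ) c := by
        rw [Metric.mem_closedBall, dist_zero_right, norm_circleMap_zero,
          _root_.abs_of_pos (by linarith [hs.1] : (0:ℝ) < s)]
        linarith [hs.2]
      have h1 := hM _ hmem
      have h2 : |(F (circleMap 0 s θ)).re| ≤ ‖F (circleMap 0 s θ)‖ := Complex.abs_re_le_norm _
      calc ‖|(F (circleMap 0 s θ)).re|‖ = |(F (circleMap 0 s θ)).re| := by
            rw [Real.norm_eq_abs, _root_.abs_abs]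
        _ ≤ M := le_trans h2 h1
    · exact intervalIntegrable_const
    · apply Filter.Eventually.of_forall
      intro θ
      have hmemr : circleMap 0 r θ ∈ Metric.ball (0:ℂ) 1 := by
        rw [Metric.mem_ball, dist_zero_right, norm_circleMap_zero,
          _root_.abs_of_pos hr0]
        exact hr1
      have hFc : ContinuousAt F (circleMap 0 r θ) :=
        hF.continuousOn.continuousAt (Metric.isOpen_ball.mem_nhds hmemr)
      have hcm : Continuous fun s : ℝ => circleMap 0 s θ := by
        simp only [circleMap, zero_add]
        exact (Complex.continuous_ofReal.mul continuous_const)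
      have h1 : Filter.Tendsto (fun s : ℝ => circleMap 0 s θ) (nhds r)
          (nhds (circleMap 0 r θ)) := hcm.continuousAt
      have h2 := hFc.tendsto.comp h1
      have h3 := (Complex.continuous_re.tendsto _).comp h2
      have h4 := (_root_.continuous_abs.tendsto _).comp h3
      have h5 : Filter.Tendsto (fun s : ℝ => |(F (circleMap 0 s θ)).re|) (nhds r)
          (nhds |(F (circleMap 0 r θ)).re|) := h4
      exact fun _ => h5.mono_left nhdsWithin_le_nhds
  have htend2 : Filter.Tendsto
      (fun s : ℝ => 4 * π * (∫ θ in (0:ℝ)..(2*π), |(F (circleMap 0 s θ)).re|) ^ p)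
      (nhdsWithin r (Ioi r))
      (nhds (4 * π * (∫ θ in (0:ℝ)..(2*π), |(F (circleMap 0 r θ)).re|) ^ p)) := by
    apply Filter.Tendsto.const_mul
    exact htend.rpow_const (Or.inr hp0.le)
  apply ge_of_tendsto htend2
  filter_upwards [Ioo_mem_nhdsGT_of_mem (⟨le_refl r, hrc⟩ : r ∈ Ico r c)] with s hs
  exact mainIneq hp0 hp1 hF hFim0 hr0 hs.1 (by linarith [hs.2])

/-- The open unit disk in the complex plane. -/
def unitDisk : Set ℂ := Metric.ball 0 1

/-- The integral mean `M_p(r, u)` of a real-valued function `u`. -/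
def circleMeanR (p : ℝ) (u : ℂ → ℝ) (r : ℝ) : ℝ :=
  ((1 / (2 * π)) *
    ∫ θ in (0:ℝ)..(2 * π), |u (r * Complex.exp (θ * Complex.I))| ^ p) ^ (1 / p)

/-- Membership in the harmonic Hardy space `h^p` for real-valued functions. -/
def InHardyR (p : ℝ) (u : ℂ → ℝ) : Prop :=
  ∃ C : ℝ, ∀ r : ℝ, 0 < r → r < 1 → circleMeanR p u r ≤ C

/-- Kolmogorov's theorem: for `0 < p < 1`, the harmonic conjugate of an `h¹` function is
in `h^p`, with a uniform constant `B_p`. -/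
theorem kolmogorov_conjugate (p : ℝ) (hp0 : 0 < p) (hp1 : p < 1) :
    ∃ B : ℝ, ∀ (u v : ℂ → ℝ) (F : ℂ → ℂ),
      DifferentiableOn ℂ F unitDisk →
      (∀ z ∈ unitDisk, (F z).re = u z) →
      (∀ z ∈ unitDisk, (F z).im = v z) →
      v 0 = 0 →
      InHardyR 1 u →
      InHardyR p v ∧ ∀ r : ℝ, 0 < r → r < 1 → circleMeanR p v r ≤ B * circleMeanR 1 u r := by
  have hc₀ : 0 < Real.cos (p * π / 2) := by
    apply Real.cos_pos_of_mem_Ioo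
    constructor
    · nlinarith [pi_pos]
    · nlinarith [pi_pos]
  set A : ℝ := 2 / (Real.cos (p * π / 2) * (2*π) ^ p) with hAdef
  have hA0 : 0 < A := by
    rw [hAdef]
    have : (0:ℝ) < (2*π) ^ p := Real.rpow_pos_of_pos (by positivity) p
    positivity
  refine ⟨A ^ (1/p) * (2*π), fun u v F hFd hre him hv0 hu1 => ?_⟩
  have hF : DifferentiableOn ℂ F (Metric.ball 0 1) := hFd
  have h0mem : (0:ℂ) ∈ unitDisk := by simp [unitDisk]
  have hFim0 : (F 0).im = 0 := by rw [him 0 h0mem, hv0]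
  have hB0 : 0 ≤ A ^ (1/p) * (2*π) := by positivity
  have main : ∀ r : ℝ, 0 < r → r < 1 → circleMeanR p v r ≤ (A ^ (1/p) * (2*π)) * circleMeanR 1 u r := by
    intro r hr0 hr1
    have hmemθ : ∀ θ : ℝ, ((r:ℂ) * Complex.exp ((θ:ℂ) * I)) ∈ unitDisk := by
      intro θ
      rw [unitDisk, Metric.mem_ball, dist_zero_right, norm_mul,
        Complex.norm_real, Real.norm_eq_abs, Complex.norm_exp_ofReal_mul_I,
        _root_.abs_of_pos hr0, mul_one]
      exact hr1
    have hcirc : ∀ θ : ℝ, circleMap 0 r θ = (r:ℂ) * Complex.exp ((θ:ℂ) * I) := by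
      intro θ
      simp [circleMap]
    set Iim : ℝ := ∫ θ in (0:ℝ)..(2*π), |(F (circleMap 0 r θ)).im| ^ p with hIimdef
    set Ire : ℝ := ∫ θ in (0:ℝ)..(2*π), |(F (circleMap 0 r θ)).re| with hIredef
    have hIim0 : 0 ≤ Iim := by
      rw [hIimdef]
      apply intervalIntegral.integral_nonneg (by positivity)
      intro θ _
      positivity
    have hIre0 : 0 ≤ Ire := by
      rw [hIredef]
      apply intervalIntegral.integral_nonneg (by positivity)
      intro θ _
      positivity
    have hveq : circleMeanR p v r = ((1/(2*π)) * Iim) ^ (1/p) := by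
      rw [circleMeanR, hIimdef]
      congr 2
      apply intervalIntegral.integral_congr
      intro θ _
      simp only [hcirc θ, him _ (hmemθ θ)]
    have hueq : circleMeanR 1 u r = (1/(2*π)) * Ire := by
      have h11 : (1:ℝ)/1 = 1 := by norm_num
      rw [circleMeanR, h11, Real.rpow_one, hIredef]
      congr 1
      apply intervalIntegral.integral_congr
      intro θ _
      simp only [hcirc θ, hre _ (hmemθ θ), Real.rpow_one]
    have hcore := coreIneq hp0 hp1 hF hFim0 hr0 hr1
    rw [← hIimdef, ← hIredef] at hcore
    have h1 : Iim ≤ 4 * π * Ire ^ p / (Real.cos (p * π / 2) * (2*π) ^ p) := by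
      rw [le_div_iff₀ (by
        have : (0:ℝ) < (2*π) ^ p := Real.rpow_pos_of_pos (by positivity) p
        positivity)]
      calc Iim * (Real.cos (p * π / 2) * (2*π) ^ p)
          = Real.cos (p * π / 2) * ((2*π) ^ p * Iim) := by ring
        _ ≤ 4 * π * Ire ^ p := hcore
    have h2 : (1/(2*π)) * Iim ≤ A * Ire ^ p := by
      have h3 : (1/(2*π)) * (4 * π * Ire ^ p / (Real.cos (p * π / 2) * (2*π) ^ p))
          = A * Ire ^ p := by
        rw [hAdef]
        have hπ : (π:ℝ) ≠ 0 := pi_ne_zero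
        have hcπ : Real.cos (p * π / 2) * (2*π) ^ p ≠ 0 := by
          have : (0:ℝ) < (2*π) ^ p := Real.rpow_pos_of_pos (by positivity) p
          positivity
        field_simp
        ring
      rw [← h3]
      exact mul_le_mul_of_nonneg_left h1 (by positivity)
    rw [hveq, hueq]
    calc ((1/(2*π)) * Iim) ^ (1/p) ≤ (A * Ire ^ p) ^ (1/p) := by
          apply Real.rpow_le_rpow (by positivity) h2 (by positivity)
      _ = A ^ (1/p) * (Ire ^ p) ^ (1/p) := Real.mul_rpow hA0.le (by positivity)
      _ = A ^ (1/p) * Ire := by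
          rw [← Real.rpow_mul hIre0, mul_one_div, div_self hp0.ne', Real.rpow_one]
      _ = (A ^ (1/p) * (2*π)) * ((1/(2*π)) * Ire) := by
          field_simp
  constructor
  · obtain ⟨C, hC⟩ := hu1
    refine ⟨(A ^ (1/p) * (2*π)) * C, fun r hr0 hr1 => ?_⟩
    exact le_trans (main r hr0 hr1) (mul_le_mul_of_nonneg_left (hC r hr0 hr1) hB0)
  · exact main
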